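/- arXiv:2503.11176 — 7 statements merged into one kernel-verified Lean document; each statement's English description precedes it below -/
import Mathlib

section
/- Let G be a 2-connected claw-free graph and let {x,y} be a 2-element vertex-cut of G. Then G − {x,y} has exactly two connected components. -/
open SimpleGraph

/-- A decomposition witnessing a Θ-graph inside `G`: three internally disjoint paths
between two distinct vertices, each of length at least 1, at most one of length 1. -/
def IsThetaDecomp {V : Type} (G : SimpleGraph V) {u v : V} (p1 p2 p3 : G.Walk u v) : Prop :=
  u ≠ v ∧ p1.IsPath ∧ p2.IsPath ∧ p3.IsPath ∧
  (∀ w, w ∈ p1.support → w ∈ p2.support → w = u ∨ w = v) ∧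
  (∀ w, w ∈ p1.support → w ∈ p3.support → w = u ∨ w = v) ∧
  (∀ w, w ∈ p2.support → w ∈ p3.support → w = u ∨ w = v) ∧
  1 ≤ p1.length ∧ 1 ≤ p2.length ∧ 1 ≤ p3.length ∧
  ¬(p1.length = 1 ∧ p2.length = 1) ∧ ¬(p1.length = 1 ∧ p3.length = 1) ∧
  ¬(p2.length = 1 ∧ p3.length = 1)

/-- `G` has a spanning Θ-subgraph. -/
def HasSpanningTheta {V : Type} (G : SimpleGraph V) : Prop :=
  ∃ (u v : V) (p1 p2 p3 : G.Walk u v), IsThetaDecomp G p1 p2 p3 ∧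
    ∀ w : V, w ∈ p1.support ∨ w ∈ p2.support ∨ w ∈ p3.support

/-- `G` is 2-connected: at least 3 vertices, connected, and deleting any single
vertex leaves a connected graph. -/
def TwoConnected {V : Type} [Fintype V] (G : SimpleGraph V) : Prop :=
  3 ≤ Fintype.card V ∧ G.Connected ∧ ∀ v : V, (G.induce {w | w ≠ v}).Connected

/-- `G` is a cycle: connected and every vertex has exactly two neighbors. -/
def IsCycleGraph {V : Type} (G : SimpleGraph V) : Prop :=
  G.Connected ∧ ∀ v : V, (G.neighborSet v).ncard = 2

/-- `G` contains no induced copy of `H`. -/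
def IndFree {V W : Type} (G : SimpleGraph V) (H : SimpleGraph W) : Prop :=
  IsEmpty (H ↪g G)

/-! Since `G - y` is connected, every component of `G - {x, y}` contains a neighbour of `x`.
Neighbours of `x` in distinct components are distinct and non-adjacent, so three components would
yield an induced claw centred at `x`. There are at least two components because `{x, y}` is a cut
and `G` has a third vertex. -/

namespace SimpleGraph

variable {V : Type*} {G : SimpleGraph V}

lemma one_lt_card_connectedComponent_of_not_connected [Finite V] [Nonempty V]
    (h : ¬G.Connected) : 1 < Nat.card G.ConnectedComponent := by
  rw [Finite.one_lt_card_iff_nontrivial, ← not_subsingleton_iff_nontrivial]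
  exact fun _ ↦ h ⟨fun u v ↦ ConnectedComponent.exact (Subsingleton.elim _ _)⟩

section InsertVertex

variable {s : Set V} {x : V}

lemma Walk.exists_adj_reachable_of_induce_insert (hx : x ∉ s) {u v : ↥(insert x s)}
    (p : (G.induce (insert x s)).Walk u v) (hv : (v : V) = x) (hu : (u : V) ∈ s) :
    ∃ a : s, G.Adj x a ∧ (G.induce s).Reachable a ⟨u, hu⟩ := by
  induction p with
  | nil => exact absurd (hv ▸ hu) hx
  | @cons u w _ huw _ ih =>
    by_cases hw : (w : V) ∈ s
    · obtain ⟨a, hxa, hreach⟩ := ih hv hw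
      exact ⟨a, hxa, hreach.trans (Adj.reachable (G := G.induce s) huw.symm)⟩
    · have hwx : (w : V) = x := (Set.mem_insert_iff.mp w.2).resolve_right hw
      have hwu : G.Adj w u := huw.symm
      rw [hwx] at hwu
      exact ⟨⟨u, hu⟩, hwu, Reachable.refl _⟩

lemma ConnectedComponent.exists_adj_of_preconnected_induce_insert (hx : x ∉ s)
    (h : (G.induce (insert x s)).Preconnected) (C : (G.induce s).ConnectedComponent) :
    ∃ a : s, G.Adj x a ∧ (G.induce s).connectedComponentMk a = C := by
  induction C using ConnectedComponent.ind with
  | h u =>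
    obtain ⟨p⟩ := h ⟨u, Set.mem_insert_of_mem x u.2⟩ ⟨x, Set.mem_insert x s⟩
    obtain ⟨a, hxa, hreach⟩ := p.exists_adj_reachable_of_induce_insert hx rfl u.2
    exact ⟨a, hxa, ConnectedComponent.sound hreach⟩

end InsertVertex

end SimpleGraph

lemma IndFree.card_le_two_of_pairwise_not_adj {V ι : Type} {G : SimpleGraph V}
    (hclaw : IndFree G (completeBipartiteGraph (Fin 1) (Fin 3))) {x : V} {f : ι → V}
    (hf : Function.Injective f) (hadj : ∀ i, G.Adj x (f i))
    (hind : Pairwise fun i j ↦ ¬G.Adj (f i) (f j)) : Nat.card ι ≤ 2 := by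
  rcases finite_or_infinite ι with hι | hι
  swap
  · simp [Nat.card_eq_zero_of_infinite]
  have := Fintype.ofFinite ι
  by_contra! hcard
  obtain ⟨e⟩ := Function.Embedding.nonempty_of_card_le (α := Fin 3) (β := ι)
    (by rw [Fintype.card_fin, ← Nat.card_eq_fintype_card]; exact hcard)
  refine hclaw.false ⟨⟨Sum.elim (fun _ ↦ x) (f ∘ e), ?_⟩, ?_⟩
  · rintro (i | i) (j | j) h
    · exact congrArg Sum.inl (Subsingleton.elim i j)
    · exact absurd h (hadj _).ne
    · exact absurd h.symm (hadj _).ne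
    · exact congrArg Sum.inr (e.injective (hf h))
  · rintro (i | i) (j | j)
    · exact iff_of_false G.irrefl (by simp)
    · exact iff_of_true (hadj (e j)) (by simp)
    · exact iff_of_true (hadj (e i)).symm (by simp)
    · refine iff_of_false ?_ (by simp)
      rcases eq_or_ne i j with rfl | hij
      · exact G.irrefl
      · exact hind (e.injective.ne hij)

lemma IndFree.card_connectedComponent_induce_le_two {V : Type} {G : SimpleGraph V}
    (hclaw : IndFree G (completeBipartiteGraph (Fin 1) (Fin 3))) {s : Set V} {x : V}
    (hx : x ∉ s) (h : (G.induce (insert x s)).Preconnected) :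
    Nat.card (G.induce s).ConnectedComponent ≤ 2 := by
  choose a hadj ha using ConnectedComponent.exists_adj_of_preconnected_induce_insert hx h
  refine hclaw.card_le_two_of_pairwise_not_adj (f := fun C ↦ (a C : V)) ?_ hadj ?_
  · intro C D hCD
    rw [← ha C, ← ha D, Subtype.ext hCD]
  · intro C D hCD hadjCD
    apply hCD
    rw [← ha C, ← ha D]
    exact ConnectedComponent.connectedComponentMk_eq_of_adj hadjCD

/-- If `G` is 2-connected and claw-free and `{x, y}` is a 2-cut of `G`, then
`G − {x, y}` has exactly two connected components. -/
theorem stmt_4 {V : Type} [Fintype V] (G : SimpleGraph V)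
    (h2 : TwoConnected G)
    (hclaw : IndFree G (completeBipartiteGraph (Fin 1) (Fin 3)))
    (x y : V) (hxy : x ≠ y)
    (hcut : ¬ (G.induce {w | w ≠ x ∧ w ≠ y}).Connected) :
    Nat.card ((G.induce {w | w ≠ x ∧ w ≠ y}).ConnectedComponent) = 2 := by
  classical
  obtain ⟨hcard, -, hdel⟩ := h2
  have hinsert : insert x {w | w ≠ x ∧ w ≠ y} = {w | w ≠ y} := by
    ext w
    by_cases hw : w = x <;> simp [hw, hxy]
  obtain ⟨z, -, hz⟩ := Finset.exists_mem_notMem_of_card_lt_card (s := {x, y})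
    (t := Finset.univ) (Finset.card_le_two.trans_lt hcard)
  have : Nonempty {w | w ≠ x ∧ w ≠ y} := ⟨z, by simpa [not_or] using hz⟩
  exact le_antisymm
    (hclaw.card_connectedComponent_induce_le_two (fun h ↦ h.1 rfl)
      (hinsert ▸ (hdel y).preconnected))
    (one_lt_card_connectedComponent_of_not_connected hcut)
end

section
/- Let G be a connected non-complete graph with no induced path on four vertices (P4-free), and let S be a minimum vertex-cut of G. Then every vertex of S is adjacent to every vertex of G − S. -/
open SimpleGraph

/-
Let `a ∈ S` and `b ∉ S` with `a ≁ b`. Since `S` is a minimum cut, `S \ {a}` is not a cut, so `a`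
has a neighbour in every component of `G - S`. In the component of `b`, a path from `b` to a
neighbour of `a` contains an edge `xy` with `x ≁ a` and `y ~ a`; with a neighbour `w` of `a` in
another component, `x - y - a - w` is an induced `P₄`.
-/

namespace SimpleGraph

variable {V : Type*} {G : SimpleGraph V}

lemma Reachable.exists_boundary_adj {P : V → Prop} {u v : V} (h : G.Reachable u v) (hu : ¬ P u)
    (hv : P v) : ∃ x y, G.Reachable u x ∧ G.Adj x y ∧ ¬ P x ∧ P y := by
  classical
  obtain ⟨p⟩ := h
  obtain ⟨d, hd, hx, hy⟩ := p.exists_boundary_dart {x | ¬ P x} hu (not_not.mpr hv)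
  exact ⟨d.fst, d.snd, ⟨p.takeUntil _ (p.dart_fst_mem_support_of_mem_darts hd)⟩, d.adj, hx,
    not_not.mp hy⟩

def pathGraphFourEmbedding {x y z w : V} (hxy : G.Adj x y) (hyz : G.Adj y z) (hzw : G.Adj z w)
    (hxz : ¬ G.Adj x z) (hxw : ¬ G.Adj x w) (hyw : ¬ G.Adj y w) : pathGraph 4 ↪g G where
  toFun := ![x, y, z, w]
  inj' := by
    have hxz' : x ≠ z := fun h => hxw (h ▸ hzw)
    have hxw' : x ≠ w := fun h => hyw (h ▸ hxy.symm)
    have hyw' : y ≠ w := fun h => hxw (h ▸ hxy)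
    intro i j h
    fin_cases i <;> fin_cases j <;>
      simp_all [hxy.ne, hyz.ne, hzw.ne, hxy.ne.symm, hyz.ne.symm, hzw.ne.symm, hxz'.symm,
        hxw'.symm, hyw'.symm]
  map_rel_iff' := by
    intro i j
    show G.Adj (![x, y, z, w] i) (![x, y, z, w] j) ↔ _
    fin_cases i <;> fin_cases j <;>
      simp [pathGraph_adj, hxy, hyz, hzw, hxz, hxw, hyw, hxy.symm, hyz.symm, hzw.symm,
        G.adj_comm z x, G.adj_comm w x, G.adj_comm w y]

lemma not_connected_induce_compl_diff_singleton {S : Set V} {a : V} (ha : a ∈ S) (z : ↥Sᶜ)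
    (hz : ∀ w : ↥Sᶜ, (G.induce Sᶜ).Reachable z w → ¬ G.Adj a w) :
    ¬ (G.induce (S \ {a})ᶜ).Connected := by
  intro hconn
  have haT : a ∈ (S \ {a})ᶜ := fun h => h.2 rfl
  have hzT : z.1 ∈ (S \ {a})ᶜ := fun h => z.2 h.1
  obtain ⟨x, y, -, hxy, hx, ⟨hyS, hzy⟩⟩ :=
    (hconn.preconnected ⟨a, haT⟩ ⟨z, hzT⟩).exists_boundary_adj
      (P := fun u : ↥(S \ {a})ᶜ => ∃ h : u.1 ∈ Sᶜ, (G.induce Sᶜ).Reachable z ⟨u.1, h⟩)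
      (fun ⟨h, _⟩ => h ha) ⟨z.2, .rfl⟩
  by_cases hxS : x.1 ∈ S
  · have hxa : x.1 = a := by_contra fun hne => x.2 ⟨hxS, hne⟩
    have hay : G.Adj x y := hxy
    rw [hxa] at hay
    exact hz _ hzy hay
  · exact hx ⟨hxS, hzy.trans (Adj.reachable (G := G.induce Sᶜ) hxy.symm)⟩

lemma exists_reachable_adj_of_mem_minimum_cut [Finite V] {S : Set V}
    (hmin : ∀ T : Set V, ¬ (G.induce Tᶜ).Connected → S.ncard ≤ T.ncard) {a : V} (ha : a ∈ S)
    (z : ↥Sᶜ) : ∃ w : ↥Sᶜ, (G.induce Sᶜ).Reachable z w ∧ G.Adj a w := by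
  by_contra! hz
  have := hmin _ (not_connected_induce_compl_diff_singleton ha z hz)
  have := Set.ncard_sdiff_singleton_lt_of_mem ha
  omega

end SimpleGraph

theorem stmt_5_general {V : Type} [Fintype V] (G : SimpleGraph V)
    (hP4 : IndFree G (pathGraph 4))
    (S : Set V)
    (hcut : ¬ (G.induce Sᶜ).Connected)
    (hmin : ∀ T : Set V, ¬ (G.induce Tᶜ).Connected → S.ncard ≤ T.ncard) :
    ∀ a ∈ S, ∀ b ∈ Sᶜ, G.Adj a b := by
  intro a ha b hb
  by_contra hab
  set H := G.induce Sᶜ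
  obtain ⟨d, hbd⟩ : ∃ d, ¬ H.Reachable ⟨b, hb⟩ d := by
    by_contra! h
    exact hcut ((connected_iff_exists_forall_reachable H).mpr ⟨_, h⟩)
  obtain ⟨w₁, hbw₁, haw₁⟩ := exists_reachable_adj_of_mem_minimum_cut hmin ha ⟨b, hb⟩
  obtain ⟨w₂, hdw₂, haw₂⟩ := exists_reachable_adj_of_mem_minimum_cut hmin ha d
  have hbw₂ : ¬ H.Reachable ⟨b, hb⟩ w₂ := fun h => hbd (h.trans hdw₂.symm)
  obtain ⟨x, y, hbx, hxy, hax, hay⟩ :=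
    hbw₁.exists_boundary_adj (P := fun u : ↥Sᶜ => G.Adj a u) hab haw₁
  have hxw₂ : ¬ G.Adj x w₂ := fun h => hbw₂ (hbx.trans (Adj.reachable (G := H) h))
  have hyw₂ : ¬ G.Adj y w₂ := fun h =>
    hbw₂ ((hbx.trans (Adj.reachable (G := H) hxy)).trans (Adj.reachable (G := H) h))
  exact hP4.false (pathGraphFourEmbedding hxy hay.symm haw₂ (fun h => hax h.symm) hxw₂ hyw₂)

/-- Egawa's theorem: in a connected non-complete `P₄`-free graph, every vertex of a
minimum vertex-cut is adjacent to every vertex outside the cut. -/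
theorem stmt_5 {V : Type} [Fintype V] (G : SimpleGraph V)
    (hconn : G.Connected)
    (hncomp : ∃ v w : V, v ≠ w ∧ ¬ G.Adj v w)
    (hP4 : IndFree G (pathGraph 4))
    (S : Set V)
    (hcut : ¬ (G.induce Sᶜ).Connected)
    (hmin : ∀ T : Set V, ¬ (G.induce Tᶜ).Connected → S.ncard ≤ T.ncard) :
    ∀ a ∈ S, ∀ b ∈ Sᶜ, G.Adj a b :=
  stmt_5_general G hP4 S hcut hmin
end

section
/- Every 2-connected graph G that is K_{1,4}-free and P4-free has independence number at most 3. -/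
open SimpleGraph

/-!
In a `P₄`-free graph two non-adjacent vertices joined by a path have a common neighbour, by
induction along the path: if `u ~ x` and `y` is a common neighbour of `x` and `w`, then either
`u ~ y` or `u x y w` is an induced `P₄`.

Let `S` be an independent set with at least two vertices in a connected `P₄`-free graph, and let
`x` miss as few vertices of `S` as possible. If `x` missed `c ∈ S`, a common neighbour `y` of
`x` and `c` would have to miss some neighbour `a ∈ S` of `x`, by minimality, and `a x y c` would be
an induced `P₄`. So `x` sees all of `S`, and `K_{1,4}`-freeness bounds `|S|` by `3`.
-/

open Finset

namespace IndFree

variable {V : Type} {G : SimpleGraph V}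

lemma false_of_path4 (hP4 : IndFree G (pathGraph 4)) {a b c d : V}
    (hab : G.Adj a b) (hbc : G.Adj b c) (hcd : G.Adj c d)
    (hac : ¬ G.Adj a c) (had : ¬ G.Adj a d) (hbd : ¬ G.Adj b d) : False := by
  have hne_ac : a ≠ c := by rintro rfl; exact had hcd
  have hne_ad : a ≠ d := by rintro rfl; exact hbd hab.symm
  have hne_bd : b ≠ d := by rintro rfl; exact had hab
  refine hP4.false ⟨⟨![a, b, c, d], ?_⟩, fun {i j} => ?_⟩
  · intro i j hij
    fin_cases i <;> fin_cases j <;>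
      simp_all [hab.ne, hbc.ne, hcd.ne, hab.ne.symm, hbc.ne.symm, hcd.ne.symm]
  · change G.Adj (![a, b, c, d] i) (![a, b, c, d] j) ↔ _
    fin_cases i <;> fin_cases j <;>
      simp [pathGraph_adj, hab, hbc, hcd, hab.symm, hbc.symm, hcd.symm, hac, had, hbd,
        mt Adj.symm hac, mt Adj.symm had, mt Adj.symm hbd]

lemma card_lt_of_forall_adj {n : ℕ} (hK : IndFree G (completeBipartiteGraph (Fin 1) (Fin n)))
    {S : Finset V} (hS : G.IsIndepSet S) {x : V} (hx : ∀ s ∈ S, G.Adj x s) : #S < n := by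
  by_contra! hn
  let f : Fin n ↪ V := (Fin.castLEEmb hn).trans (S.equivFin.symm.toEmbedding.trans (.subtype _))
  have hfS : ∀ i, f i ∈ S := fun i => (S.equivFin.symm _).2
  have hxf : ∀ i, x ≠ f i := fun i h => G.irrefl (h ▸ hx _ (hfS i))
  refine hK.false ⟨⟨Sum.elim (fun _ => x) f, ?_⟩, fun {i j} => ?_⟩
  · exact Function.Injective.sumElim (fun _ _ _ => Subsingleton.elim _ _) f.injective
      fun _ j => hxf j
  · change G.Adj (Sum.elim (fun _ => x) f i) (Sum.elim (fun _ => x) f j) ↔ _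
    rcases i with i | i <;> rcases j with j | j
    · simp
    · simpa using hx _ (hfS j)
    · simpa using (hx _ (hfS i)).symm
    · simpa using fun h => hS (hfS i) (hfS j) h.ne h

lemma exists_adj_adj_of_reachable (hP4 : IndFree G (pathGraph 4)) {u w : V}
    (huw : G.Reachable u w) (hne : u ≠ w) (hnadj : ¬ G.Adj u w) :
    ∃ x, G.Adj u x ∧ G.Adj x w := by
  obtain ⟨p⟩ := huw
  induction p with
  | nil => exact (hne rfl).elim
  | @cons u x w hux q ih =>
    by_cases hxw : G.Adj x w
    · exact ⟨x, hux, hxw⟩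
    obtain ⟨y, hxy, hyw⟩ := ih (fun h => hnadj (h ▸ hux)) hxw
    by_cases huy : G.Adj u y
    · exact ⟨y, huy, hyw⟩
    exact (hP4.false_of_path4 hux hxy hyw huy hnadj hxw).elim

lemma exists_forall_adj_of_isIndepSet (hP4 : IndFree G (pathGraph 4)) (hG : G.Connected)
    {S : Finset V} (hS : G.IsIndepSet S) (hcard : 1 < #S) : ∃ x, ∀ s ∈ S, G.Adj x s := by
  classical
  let missed : V → ℕ := fun x => #{s ∈ S | ¬ G.Adj x s}
  obtain ⟨a, ha, b, hb, hab⟩ := one_lt_card.1 hcard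
  obtain ⟨z, haz, -⟩ := hP4.exists_adj_adj_of_reachable (hG a b) hab (hS ha hb hab)
  have : Nonempty V := ⟨a⟩
  set x := Function.argmin missed
  have hmin : ∀ y, missed x ≤ missed y := fun y => Function.argmin_le missed y
  refine ⟨x, fun c hc => ?_⟩
  by_contra hxc
  have hx_lt : missed x < #S :=
    (hmin z).trans_lt (card_lt_card (filter_ssubset.2 ⟨a, ha, not_not.2 haz.symm⟩))
  have hxc_ne : x ≠ c := by
    rintro rfl
    exact hx_lt.ne (congrArg card (filter_true_of_mem fun s hs h => hS hc hs h.ne h))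
  obtain ⟨y, hxy, hyc⟩ := hP4.exists_adj_adj_of_reachable (hG.preconnected x c) hxc_ne hxc
  obtain ⟨a', ha', hxa', hya'⟩ : ∃ a' ∈ S, G.Adj x a' ∧ ¬ G.Adj y a' := by
    by_contra! h
    refine (hmin y).not_gt (card_lt_card ⟨fun s hs => ?_, fun hsub => ?_⟩)
    · simp only [mem_filter] at hs ⊢
      exact ⟨hs.1, fun hxs => hs.2 (h s hs.1 hxs)⟩
    · simpa [hyc] using hsub (mem_filter.2 ⟨hc, hxc⟩)
  have ha'c : a' ≠ c := by rintro rfl; exact hxc hxa'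
  exact hP4.false_of_path4 hxa'.symm hxy hyc (mt Adj.symm hya') (hS ha' hc ha'c) hxc

end IndFree

/-- Every 2-connected `{K_{1,4}, P₄}`-free graph has independence number at most 3. -/
theorem stmt_7 {V : Type} [Fintype V] (G : SimpleGraph V)
    (h2 : TwoConnected G)
    (hK14 : IndFree G (completeBipartiteGraph (Fin 1) (Fin 4)))
    (hP4 : IndFree G (pathGraph 4)) :
    ∀ A : Set V, (∀ a ∈ A, ∀ b ∈ A, a ≠ b → ¬ G.Adj a b) → A.ncard ≤ 3 := by
  classical
  intro A hA
  have hS : G.IsIndepSet (A.toFinset : Set V) := by rw [Set.coe_toFinset]; exact hA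
  rw [Set.ncard_eq_toFinset_card']
  by_contra! hcard
  obtain ⟨x, hx⟩ := hP4.exists_forall_adj_of_isIndepSet h2.2.1 hS (by omega)
  exact (hK14.card_lt_of_forall_adj hS hx).not_ge hcard
end

section
/- Let F be a 3-edge-connected loopless multigraph with at least four vertices of odd degree such that every 2-edge-connected proper subgraph of F has at most two vertices of odd degree. Then F has exactly four vertices, and every vertex of F has odd degree. -/
/-! Deleting an edge `ab` from a 3-edge-connected loopless multigraph leaves a proper
2-edge-connected spanning subgraph whose odd vertices are those of `F` with the parity of `a`
and `b` flipped. Having at most two of them while `F` has at least four forces `a`, `b` to be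
odd and `F` to have exactly four odd vertices. Every vertex lies on an edge, so every vertex is
odd, and there are four of them. -/

open scoped Classical

/-- A multigraph on vertex type `V` with edge type `E`: each edge has a pair of
endpoints (a loop has both endpoints equal). -/
structure Multigraph (V E : Type) where
  ends : E → Sym2 V

namespace Multigraph

variable {V E : Type}

/-- Walks in a multigraph, recording the edges traversed. -/
inductive Walk (M : Multigraph V E) : V → V → Type
  | nil (v : V) : Walk M v v
  | cons {u v w : V} (e : E) (h : M.ends e = s(u, v)) (p : Walk M v w) : Walk M u w

/-- The list of edges traversed by a walk. -/
def Walk.edgeList {M : Multigraph V E} : ∀ {u v : V}, M.Walk u v → List E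
  | _, _, .nil _ => []
  | _, _, .cons e _ p => e :: p.edgeList

/-- The list of vertices visited by a walk. -/
def Walk.supportList {M : Multigraph V E} : ∀ {u v : V}, M.Walk u v → List V
  | u, _, .nil _ => [u]
  | u, _, .cons _ _ p => u :: p.supportList

/-- Reachability using only edges from the set `A`. -/
def ReachIn (M : Multigraph V E) (A : Set E) (u v : V) : Prop :=
  Relation.ReflTransGen (fun a b => ∃ e ∈ A, M.ends e = s(a, b)) u v

/-- A multigraph is connected if every two vertices are joined by a walk. -/
def Connected (M : Multigraph V E) : Prop :=
  ∀ u v : V, M.ReachIn Set.univ u v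

/-- `M` is `k`-edge-connected: after removing any fewer than `k` edges, every two
vertices remain joined. -/
def EdgeConnAtLeast (M : Multigraph V E) (k : ℕ) : Prop :=
  ∀ D : Set E, D.ncard < k → ∀ u v : V, M.ReachIn Dᶜ u v

/-- The multiplicity with which the vertex `v` occurs in the endpoint pair `s`
(2 for a loop at `v`). -/
noncomputable def mult (s : Sym2 V) (v : V) : ℕ :=
  if s = Sym2.diag v then 2 else if v ∈ s then 1 else 0

/-- Degree of `v` counting only the edges in `A`. -/
noncomputable def degIn [Fintype E] (M : Multigraph V E) (A : Set E) (v : V) : ℕ :=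
  ∑ e : E, if e ∈ A then mult (M.ends e) v else 0

/-- Degree of `v` in `M` (a loop counts twice). -/
noncomputable def deg [Fintype E] (M : Multigraph V E) (v : V) : ℕ :=
  M.degIn Set.univ v

/-- `M` has no loops. -/
def Loopless (M : Multigraph V E) : Prop :=
  ∀ e : E, ¬ (M.ends e).IsDiag

/-- `(S, A)` is a subgraph of `M`: all endpoints of edges of `A` lie in `S`. -/
def IsSubgraph (M : Multigraph V E) (S : Set V) (A : Set E) : Prop :=
  ∀ e ∈ A, ∀ v ∈ M.ends e, v ∈ S

/-- The subgraph `(S, A)` is connected. -/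
def SubConnected (M : Multigraph V E) (S : Set V) (A : Set E) : Prop :=
  ∀ u ∈ S, ∀ v ∈ S, M.ReachIn A u v

/-- The subgraph `(S, A)` is 2-edge-connected. -/
def SubTwoEdgeConn (M : Multigraph V E) (S : Set V) (A : Set E) : Prop :=
  M.SubConnected S A ∧ ∀ e₀ ∈ A, M.SubConnected S (A \ {e₀})

end Multigraph

open scoped symmDiff

theorem Set.ncard_symmDiff_add_two_mul_ncard_inter {α : Type*} (s t : Set α)
    (hs : s.Finite := by toFinite_tac) (ht : t.Finite := by toFinite_tac) :
    (s ∆ t).ncard + 2 * (s ∩ t).ncard = s.ncard + t.ncard := by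
  have hunion := Set.ncard_union_add_ncard_inter s t hs ht
  have hdiff := Set.ncard_sdiff_add_ncard_of_subset
    (Set.inter_subset_left (t := t) |>.trans Set.subset_union_left) (hs.union ht)
  rw [symmDiff_eq_sup_sdiff_inf]
  change ((s ∪ t) \ (s ∩ t)).ncard + _ = _
  omega

theorem Set.mem_and_ncard_eq_four_of_ncard_symmDiff_pair_le_two {α : Type*} [Finite α]
    {s : Set α} {a b : α} (hab : a ≠ b) (hs : 4 ≤ s.ncard) (h : (s ∆ {a, b}).ncard ≤ 2) :
    a ∈ s ∧ b ∈ s ∧ s.ncard = 4 := by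
  have hcard := Set.ncard_symmDiff_add_two_mul_ncard_inter s {a, b}
  have hinter := Set.ncard_inter_le_ncard_right s {a, b}
  rw [Set.ncard_pair hab] at hcard hinter
  have hsub : {a, b} ⊆ s := by
    rw [← Set.inter_eq_right]
    exact Set.eq_of_subset_of_ncard_le Set.inter_subset_right (by rw [Set.ncard_pair hab]; omega)
  exact ⟨hsub (by simp), hsub (by simp), by omega⟩

namespace Multigraph

variable {V E : Type}

theorem mult_mk_of_ne {a b : V} (hab : a ≠ b) (v : V) :
    mult s(a, b) v = if v = a ∨ v = b then 1 else 0 := by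
  have hdiag : s(a, b) ≠ Sym2.diag v := by
    intro h
    rw [Sym2.diag, Sym2.eq_iff] at h
    rcases h with ⟨rfl, rfl⟩ | ⟨rfl, rfl⟩ <;> exact hab rfl
  simp [mult, hdiag]

theorem deg_eq_degIn_compl_singleton_add_mult [Fintype E] (M : Multigraph V E) (e : E) (v : V) :
    M.deg v = M.degIn {e}ᶜ v + mult (M.ends e) v := by
  simp only [deg, degIn, Set.mem_univ, if_true, Set.mem_compl_singleton_iff, ite_not]
  rw [← Finset.add_sum_erase _ _ (Finset.mem_univ e), ← Finset.add_sum_erase _ _ (Finset.mem_univ e),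
    if_pos rfl, zero_add, add_comm,
    Finset.sum_congr rfl fun x hx => if_neg (Finset.ne_of_mem_erase hx)]

theorem Loopless.ne_of_ends_eq {M : Multigraph V E} (hl : M.Loopless) {e : E} {a b : V}
    (hab : M.ends e = s(a, b)) : a ≠ b := by
  simpa [hab] using hl e

theorem setOf_odd_degIn_compl_singleton [Fintype E] {M : Multigraph V E} (hl : M.Loopless)
    {e : E} {a b : V} (hab : M.ends e = s(a, b)) :
    {v | Odd (M.degIn {e}ᶜ v)} = {v | Odd (M.deg v)} ∆ {a, b} := by
  ext v
  have hdeg := M.deg_eq_degIn_compl_singleton_add_mult e v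
  rw [hab, mult_mk_of_ne (hl.ne_of_ends_eq hab)] at hdeg
  by_cases hv : v = a ∨ v = b
  · simp [Set.mem_symmDiff, hdeg, hv, Nat.odd_add_one]
  · simp [Set.mem_symmDiff, hdeg, hv]

theorem EdgeConnAtLeast.connected {M : Multigraph V E} {k : ℕ} (h : M.EdgeConnAtLeast k)
    (hk : 0 < k) : M.Connected := by
  intro u v
  simpa using h ∅ (by simpa using hk) u v

theorem EdgeConnAtLeast.subTwoEdgeConn_univ_compl_singleton {M : Multigraph V E}
    (h : M.EdgeConnAtLeast 3) (e : E) : M.SubTwoEdgeConn Set.univ {e}ᶜ := by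
  refine ⟨fun u _ v _ => h {e} (by simp) u v, fun e' _ u _ v _ => ?_⟩
  have hpair : ({e, e'} : Set E).ncard < 3 :=
    (Set.ncard_insert_le _ _).trans_lt (by simp)
  rw [show ({e}ᶜ : Set E) \ {e'} = {e, e'}ᶜ by ext; simp [not_or]]
  exact h {e, e'} hpair u v

theorem Connected.exists_ends_eq {M : Multigraph V E} (h : M.Connected) {u v : V}
    (huv : u ≠ v) : ∃ e w, M.ends e = s(u, w) := by
  rcases (h u v).cases_head with rfl | ⟨w, ⟨e, -, he⟩, -⟩
  · exact absurd rfl huv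
  · exact ⟨e, w, he⟩

end Multigraph

open Multigraph

/-- A 3-edge-connected loopless multigraph with at least four odd-degree vertices,
all of whose 2-edge-connected proper subgraphs have at most two odd-degree vertices,
has exactly four vertices, all of odd degree. -/
theorem stmt_10 {V E : Type} [Fintype V] [Fintype E] (M : Multigraph V E)
    (hl : M.Loopless)
    (h3 : M.EdgeConnAtLeast 3)
    (hodd : 4 ≤ {v : V | Odd (M.deg v)}.ncard)
    (hmin : ∀ (S : Set V) (A : Set E), M.IsSubgraph S A →
      (S ≠ Set.univ ∨ A ≠ Set.univ) → M.SubTwoEdgeConn S A →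
      {v ∈ S | Odd (M.degIn A v)}.ncard ≤ 2) :
    Fintype.card V = 4 ∧ ∀ v : V, Odd (M.deg v) := by
  set O := {v : V | Odd (M.deg v)}
  have hedge : ∀ e a b, M.ends e = s(a, b) → a ∈ O ∧ b ∈ O ∧ O.ncard = 4 := by
    intro e a b hab
    refine Set.mem_and_ncard_eq_four_of_ncard_symmDiff_pair_le_two (hl.ne_of_ends_eq hab) hodd ?_
    have hsub := hmin Set.univ {e}ᶜ (fun _ _ v _ => Set.mem_univ v) (Or.inr (by simp))
      (h3.subTwoEdgeConn_univ_compl_singleton e)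
    rwa [Set.sep_univ, setOf_odd_degIn_compl_singleton hl hab] at hsub
  have hincident : ∀ v, ∃ e w, M.ends e = s(v, w) := fun v =>
    have ⟨u, _, huv⟩ := Set.exists_ne_of_one_lt_ncard (s := O) (by omega) v
    (h3.connected (by norm_num)).exists_ends_eq (Ne.symm huv)
  have hall : ∀ v, v ∈ O := fun v =>
    have ⟨e, w, he⟩ := hincident v
    (hedge e v w he).1
  obtain ⟨v, -⟩ := Set.nonempty_of_ncard_ne_zero (s := O) (by omega)
  obtain ⟨e, w, he⟩ := hincident v
  rw [← Nat.card_eq_fintype_card, ← Set.ncard_univ, ← Set.eq_univ_of_forall hall]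
  exact ⟨(hedge e v w he).2.2, hall⟩
end

section
/- Let R be a connected graph on at least 3 vertices with the property that every 2-connected R-free graph that is not a cycle has a spanning Θ-subgraph. Then R = P3. -/
open SimpleGraph

/-! If `R` is not an induced subgraph of a 2-connected non-cycle `G` without a spanning Θ-subgraph,
then `G` is `R`-free and the hypothesis yields a contradiction; so `R` is induced both in `K₂,₄`
and in the truncated tetrahedron with its six inter-triangle edges subdivided. The edge set of a
spanning Θ-subgraph is a 2-edge cover with `|V| + 1` edges. In `K₂,₄` the four vertices of degree
two force `8 > 7` edges; in the tetrahedron graph the six connectors force `12` edges and each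
triangle two more, `20 > 19`. The tetrahedron graph has no claw and no induced `C₄`, and the only
connected graph on at least three vertices that is an induced subgraph of a complete bipartite
graph without these is `P₃`. -/

namespace SimpleGraph.Walk

variable {V : Type} {G : SimpleGraph V}

lemma IsPath.length_eq_one_of_snd_eq {u v : V} {p : G.Walk u v} (hp : p.IsPath) (hnil : ¬p.Nil)
    (h : p.snd = v) : p.length = 1 := by
  cases p with
  | nil => exact absurd .nil hnil
  | cons hadj q =>
    rw [snd_cons] at h
    subst h
    simp [length_eq_zero_iff.mpr (isPath_iff_nil.mp ((cons_isPath_iff _ _).mp hp).1)]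

lemma IsPath.exists_ne_mem_edges {u v w : V} {p : G.Walk u v} (hp : p.IsPath)
    (hw : w ∈ p.support) (hwu : w ≠ u) (hwv : w ≠ v) :
    ∃ a b, a ≠ b ∧ s(w, a) ∈ p.edges ∧ s(w, b) ∈ p.edges := by
  classical
  set q := p.takeUntil w hw
  set r := p.dropUntil w hw
  have hq : ¬q.Nil := not_nil_of_ne hwu.symm
  have hr : ¬r.Nil := not_nil_of_ne hwv
  refine ⟨q.penultimate, r.snd, fun h => ?_,
    p.edges_takeUntil_subset_edges hw (Sym2.eq_swap ▸ q.mk_penultimate_end_mem_edges hq),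
    p.edges_dropUntil_subset_edges hw (r.mk_start_snd_mem_edges hr)⟩
  have hnd := hp.support_nodup
  rw [← p.take_spec hw, support_append, List.nodup_append] at hnd
  exact hnd.2.2 _ (q.getVert_mem_support _) _ (r.snd_mem_tail_support hr) h

end SimpleGraph.Walk

section Theta

variable {V : Type} {G : SimpleGraph V} {u v : V} {p₁ p₂ p₃ : G.Walk u v}

lemma IsThetaDecomp.reverse (hd : IsThetaDecomp G p₁ p₂ p₃) :
    IsThetaDecomp G p₁.reverse p₂.reverse p₃.reverse := by
  obtain ⟨huv, h₁, h₂, h₃, h₁₂, h₁₃, h₂₃, hl⟩ := hd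
  simp only [IsThetaDecomp, Walk.support_reverse, List.mem_reverse, Walk.length_reverse]
  exact ⟨huv.symm, h₁.reverse, h₂.reverse, h₃.reverse, fun w hw hw' => (h₁₂ w hw hw').symm,
    fun w hw hw' => (h₁₃ w hw hw').symm, fun w hw hw' => (h₂₃ w hw hw').symm, hl⟩

lemma IsThetaDecomp.exists_start (hd : IsThetaDecomp G p₁ p₂ p₃) :
    ∃ a b, a ≠ b ∧ s(u, a) ∈ p₁.edges ∧ s(u, b) ∈ p₂.edges := by
  obtain ⟨-, h₁, h₂, -, h₁₂, -, -, hl₁, hl₂, -, hl₁₂, -⟩ := hd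
  have hn₁ : ¬p₁.Nil := Walk.not_nil_iff_lt_length.mpr hl₁
  have hn₂ : ¬p₂.Nil := Walk.not_nil_iff_lt_length.mpr hl₂
  refine ⟨p₁.snd, p₂.snd, fun h => ?_, p₁.mk_start_snd_mem_edges hn₁,
    p₂.mk_start_snd_mem_edges hn₂⟩
  -- a common second vertex must be `v`, and then both paths are single edges
  have hmem : p₁.snd ∈ p₂.support := h ▸ (p₂.getVert_mem_support 1 : p₂.snd ∈ p₂.support)
  rcases h₁₂ _ (p₁.getVert_mem_support 1) hmem with hu | hv
  · exact (p₁.adj_snd hn₁).ne hu.symm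
  · exact hl₁₂ ⟨h₁.length_eq_one_of_snd_eq hn₁ hv, h₂.length_eq_one_of_snd_eq hn₂ (h ▸ hv)⟩

lemma IsThetaDecomp.length_add_le [Fintype V] (hd : IsThetaDecomp G p₁ p₂ p₃) :
    p₁.length + p₂.length + p₃.length ≤ Fintype.card V + 1 := by
  classical
  obtain ⟨-, h₁, h₂, h₃, h₁₂, h₁₃, h₂₃, -⟩ := hd
  have hcard {x y : V} (p : G.Walk x y) (hp : p.IsPath) :
      p.support.toFinset.card = p.length + 1 := by
    rw [List.toFinset_card_of_nodup hp.support_nodup, Walk.length_support]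
  set S₁ := p₁.support.toFinset
  set S₂ := p₂.support.toFinset
  set S₃ := p₃.support.toFinset
  have hi₁₂ : S₁ ∩ S₂ ⊆ {u, v} := fun w hw => by
    simp only [Finset.mem_inter, List.mem_toFinset, S₁, S₂] at hw
    simpa using h₁₂ w hw.1 hw.2
  have hi₃ : (S₁ ∪ S₂) ∩ S₃ ⊆ {u, v} := fun w hw => by
    simp only [Finset.mem_inter, Finset.mem_union, List.mem_toFinset, S₁, S₂, S₃] at hw
    simpa using hw.1.elim (h₁₃ w · hw.2) (h₂₃ w · hw.2)
  have := Finset.card_union_add_card_inter S₁ S₂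
  have := Finset.card_union_add_card_inter (S₁ ∪ S₂) S₃
  have := (Finset.card_le_card hi₁₂).trans Finset.card_le_two
  have := (Finset.card_le_card hi₃).trans Finset.card_le_two
  have := Finset.card_le_univ (S₁ ∪ S₂ ∪ S₃)
  have : S₁.card = p₁.length + 1 := hcard p₁ h₁
  have : S₂.card = p₂.length + 1 := hcard p₂ h₂
  have : S₃.card = p₃.length + 1 := hcard p₃ h₃
  omega

end Theta

namespace SimpleGraph

variable {V W : Type} {G : SimpleGraph V} {R : SimpleGraph W}

def IsTwoEdgeCover (G : SimpleGraph V) (E : Finset (Sym2 V)) : Prop :=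
  (∀ e ∈ E, e ∈ G.edgeSet) ∧ ∀ v, ∃ a b, a ≠ b ∧ s(v, a) ∈ E ∧ s(v, b) ∈ E

namespace IsTwoEdgeCover

variable {E : Finset (Sym2 V)} {v a b c : V}

lemma exists_adj_ne (hE : G.IsTwoEdgeCover E) (v c : V) :
    ∃ a, a ≠ c ∧ G.Adj v a ∧ s(v, a) ∈ E := by
  obtain ⟨x, y, hxy, hx, hy⟩ := hE.2 v
  by_cases hxc : x = c
  · exact ⟨y, fun h => hxy (hxc.trans h.symm), hE.1 _ hy, hy⟩
  · exact ⟨x, hxc, hE.1 _ hx, hx⟩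

lemma mem_of_forall_adj (hE : G.IsTwoEdgeCover E) (h : ∀ y, G.Adj v y → y = a ∨ y = b) :
    s(v, a) ∈ E := by
  obtain ⟨x, hxb, hx, hxE⟩ := hE.exists_adj_ne v b
  exact (h x hx).resolve_right hxb ▸ hxE

lemma mem_or_mem_of_forall_adj (hE : G.IsTwoEdgeCover E)
    (h : ∀ y, G.Adj v y → y = a ∨ y = b ∨ y = c) : s(v, a) ∈ E ∨ s(v, b) ∈ E := by
  obtain ⟨x, hxc, hx, hxE⟩ := hE.exists_adj_ne v c
  rcases h x hx with rfl | rfl | rfl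
  exacts [.inl hxE, .inr hxE, absurd rfl hxc]

end IsTwoEdgeCover

theorem _root_.HasSpanningTheta.exists_isTwoEdgeCover [Fintype V] (h : HasSpanningTheta G) :
    ∃ E : Finset (Sym2 V), G.IsTwoEdgeCover E ∧ E.card ≤ Fintype.card V + 1 := by
  classical
  obtain ⟨u, v, p₁, p₂, p₃, hd, hcov⟩ := h
  refine ⟨(p₁.edges ++ p₂.edges ++ p₃.edges).toFinset, ⟨fun e he => ?_, fun w => ?_⟩, ?_⟩
  · simp only [List.mem_toFinset, List.mem_append] at he
    rcases he with (he | he) | he <;> exact Walk.edges_subset_edgeSet _ he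
  · simp only [List.mem_toFinset, List.mem_append]
    by_cases hwu : w = u
    · subst hwu
      obtain ⟨a, b, hab, ha, hb⟩ := hd.exists_start
      exact ⟨a, b, hab, .inl (.inl ha), .inl (.inr hb)⟩
    by_cases hwv : w = v
    · subst hwv
      obtain ⟨a, b, hab, ha, hb⟩ := hd.reverse.exists_start
      simp only [Walk.edges_reverse, List.mem_reverse] at ha hb
      exact ⟨a, b, hab, .inl (.inl ha), .inl (.inr hb)⟩
    obtain ⟨-, h₁, h₂, h₃, -⟩ := hd
    rcases hcov w with hw | hw | hw
    · obtain ⟨a, b, hab, ha, hb⟩ := h₁.exists_ne_mem_edges hw hwu hwv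
      exact ⟨a, b, hab, .inl (.inl ha), .inl (.inl hb)⟩
    · obtain ⟨a, b, hab, ha, hb⟩ := h₂.exists_ne_mem_edges hw hwu hwv
      exact ⟨a, b, hab, .inl (.inr ha), .inl (.inr hb)⟩
    · obtain ⟨a, b, hab, ha, hb⟩ := h₃.exists_ne_mem_edges hw hwu hwv
      exact ⟨a, b, hab, .inr ha, .inr hb⟩
  · calc _ ≤ (p₁.edges ++ p₂.edges ++ p₃.edges).length := List.toFinset_card_le _
      _ = p₁.length + p₂.length + p₃.length := by simp [add_assoc]
      _ ≤ Fintype.card V + 1 := hd.length_add_le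

section StOrdering

variable {α : Type} [LinearOrder α] (f : V → α) {s t v : V}

lemma exists_reachable_induce_ne_of_descent [WellFoundedLT α]
    (hdesc : ∀ w, w ≠ s → ∃ u, G.Adj w u ∧ f u < f w) (w : V) (hw : w ≠ v) (hwv : f w ≤ f v) :
    ∃ hs : s ≠ v, (G.induce {x | x ≠ v}).Reachable ⟨w, hw⟩ ⟨s, hs⟩ := by
  induction w using (InvImage.wf f wellFounded_lt).induction with
  | _ w ih =>
    by_cases hws : w = s
    · subst hws
      exact ⟨hw, .rfl⟩
    obtain ⟨u, hwu, hlt⟩ := hdesc w hws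
    have hu : u ≠ v := by rintro rfl; exact (hlt.trans_le hwv).false
    obtain ⟨hs, hr⟩ := ih u hlt hu (hlt.le.trans hwv)
    exact ⟨hs, Adj.reachable (G := G.induce _) (by simpa using hwu) |>.trans hr⟩

/-- Descending from a vertex below `v`, or ascending from one above it, never meets `v`. -/
theorem connected_induce_ne_of_stOrdering [WellFoundedLT α] [WellFoundedGT α] (hst : G.Adj s t)
    (hs : ∀ w, w ≠ s → ∃ u, G.Adj w u ∧ f u < f w)
    (ht : ∀ w, w ≠ t → ∃ u, G.Adj w u ∧ f w < f u) (v : V) :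
    (G.induce {x | x ≠ v}).Connected := by
  have hreach (w : V) (hw : w ≠ v) :
      (∃ hs : s ≠ v, (G.induce {x | x ≠ v}).Reachable ⟨w, hw⟩ ⟨s, hs⟩) ∨
        ∃ ht : t ≠ v, (G.induce {x | x ≠ v}).Reachable ⟨w, hw⟩ ⟨t, ht⟩ :=
    (le_total (f w) (f v)).imp (exists_reachable_induce_ne_of_descent f hs w hw)
      (exists_reachable_induce_ne_of_descent (OrderDual.toDual ∘ f) ht w hw)
  rw [connected_iff_exists_forall_reachable]
  by_cases hsv : s = v
  · refine ⟨⟨t, hsv ▸ hst.ne'⟩, ?_⟩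
    rintro ⟨w, hw⟩
    rcases hreach w hw with ⟨hs, -⟩ | ⟨_, hr⟩
    · exact absurd hsv hs
    · exact hr.symm
  · refine ⟨⟨s, hsv⟩, ?_⟩
    rintro ⟨w, hw⟩
    rcases hreach w hw with ⟨_, hr⟩ | ⟨htv, hr⟩
    · exact hr.symm
    · have hst' : (G.induce {x | x ≠ v}).Adj ⟨s, hsv⟩ ⟨t, htv⟩ := by simpa using hst
      exact hst'.reachable.trans hr.symm

end StOrdering

theorem _root_.TwoConnected.of_induce_ne [Fintype V]
    (hcard : 3 ≤ Fintype.card V) (h : ∀ v, (G.induce {w | w ≠ v}).Connected) :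
    TwoConnected G := by
  classical
  refine ⟨hcard, (connected_iff _).2 ⟨fun x y => ?_, Fintype.card_pos_iff.mp (by omega)⟩, h⟩
  have hlt : ({x, y} : Finset V).card < (Finset.univ : Finset V).card :=
    Finset.card_le_two.trans_lt (by rw [Finset.card_univ]; omega)
  obtain ⟨v, -, hv⟩ := Finset.exists_mem_notMem_of_card_lt_card hlt
  simp only [Finset.mem_insert, Finset.mem_singleton, not_or] at hv
  exact ((h v).preconnected ⟨x, Ne.symm hv.1⟩ ⟨y, Ne.symm hv.2⟩).map (Embedding.induce _).toHom

lemma not_isCycleGraph_of_adj {v a b c : V} (hab : a ≠ b) (hac : a ≠ c) (hbc : b ≠ c)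
    (ha : G.Adj v a) (hb : G.Adj v b) (hc : G.Adj v c) : ¬IsCycleGraph G := by
  rintro ⟨-, h⟩
  have hv := h v
  have hle := Set.ncard_le_ncard (s := {a, b, c}) (t := G.neighborSet v)
    (by simp [Set.insert_subset_iff, ha, hb, hc]) (Set.finite_of_ncard_ne_zero (by omega))
  rw [Set.ncard_eq_three.2 ⟨a, b, c, hab, hac, hbc, rfl⟩] at hle
  omega

def IsClawFree (G : SimpleGraph V) : Prop :=
  ∀ ⦃c x y z⦄, G.Adj c x → G.Adj c y → G.Adj c z → x ≠ y → x ≠ z → y ≠ z →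
    G.Adj x y ∨ G.Adj x z ∨ G.Adj y z

def IsInducedC4Free (G : SimpleGraph V) : Prop :=
  ∀ ⦃a b c d⦄, G.Adj a b → G.Adj b c → G.Adj c d → G.Adj d a → a ≠ c → b ≠ d →
    G.Adj a c ∨ G.Adj b d

lemma IsClawFree.comap (hG : G.IsClawFree) (e : R ↪g G) : R.IsClawFree := by
  intro c x y z hx hy hz hxy hxz hyz
  simpa using hG (e.map_adj_iff.2 hx) (e.map_adj_iff.2 hy) (e.map_adj_iff.2 hz)
    (e.injective.ne hxy) (e.injective.ne hxz) (e.injective.ne hyz)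

lemma IsInducedC4Free.comap (hG : G.IsInducedC4Free) (e : R ↪g G) : R.IsInducedC4Free := by
  intro a b c d hab hbc hcd hda hac hbd
  simpa using hG (e.map_adj_iff.2 hab) (e.map_adj_iff.2 hbc) (e.map_adj_iff.2 hcd)
    (e.map_adj_iff.2 hda) (e.injective.ne hac) (e.injective.ne hbd)

lemma nonempty_iso_pathGraph_three_of_adj {x c y : W} (hne : x ≠ y) (hxc : R.Adj x c)
    (hcy : R.Adj c y) (hxy : ¬R.Adj x y) (hcover : ∀ z, z = x ∨ z = c ∨ z = y) :
    Nonempty (R ≃g pathGraph 3) := by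
  let f : Fin 3 → W := ![x, c, y]
  have hf : Function.Bijective f := by
    refine ⟨fun i j hij => ?_, fun z => ?_⟩
    · fin_cases i <;> fin_cases j <;>
        simp_all [f, hxc.ne, hcy.ne, hxc.ne.symm, hcy.ne.symm, hne.symm]
    · rcases hcover z with rfl | rfl | rfl
      exacts [⟨0, rfl⟩, ⟨1, rfl⟩, ⟨2, rfl⟩]
  refine ⟨(⟨Equiv.ofBijective f hf, fun {i j} => ?_⟩ : pathGraph 3 ≃g R).symm⟩
  fin_cases i <;> fin_cases j <;>
    simp [f, pathGraph_adj, hxc, hcy, hxc.symm, hcy.symm, hxy, mt Adj.symm hxy]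

theorem nonempty_iso_pathGraph_three_of_embedding {α β : Type} [Fintype W]
    (e : R ↪g completeBipartiteGraph α β) (hconn : R.Connected) (hcard : 3 ≤ Fintype.card W)
    (hclaw : R.IsClawFree) (hC4 : R.IsInducedC4Free) : Nonempty (R ≃g pathGraph 3) := by
  set side : W → Bool := fun z => (e z).isLeft
  have hadj (z z' : W) : R.Adj z z' ↔ side z ≠ side z' := by
    rw [← e.map_adj_iff]
    show _ ↔ (e z).isLeft ≠ (e z').isLeft
    generalize e z = a, e z' = b
    cases a <;> cases b <;> simp
  obtain ⟨x, y, hxy, hside⟩ : ∃ x y, x ≠ y ∧ side x = side y := by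
    obtain ⟨p, q, r, hpq, hpr, hqr⟩ := Fintype.two_lt_card_iff.mp hcard
    have : ∀ a b c : Bool, a = b ∨ a = c ∨ b = c := by decide
    rcases this (side p) (side q) (side r) with h | h | h
    exacts [⟨p, q, hpq, h⟩, ⟨p, r, hpr, h⟩, ⟨q, r, hqr, h⟩]
  obtain ⟨w⟩ := hconn.preconnected x y
  have hxc : R.Adj x w.snd := w.adj_snd (Walk.not_nil_of_ne hxy)
  have hc : side w.snd = !side x := Bool.eq_not.2 ((hadj _ _).1 hxc).symm
  refine nonempty_iso_pathGraph_three_of_adj hxy hxc (by simp [hadj, hc, hside])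
    (by simp [hadj, hside]) fun z => ?_
  by_contra! hz
  rcases Bool.eq_or_eq_not (side z) (side x) with hzx | hzx
  · have := hclaw (c := w.snd) (x := x) (y := y) (z := z) (by simp [hadj, hc])
      (by simp [hadj, hc, hside]) (by simp [hadj, hc, hzx]) hxy hz.1.symm hz.2.2.symm
    simp [hadj, hside, hzx] at this
  · have := hC4 (a := x) (b := w.snd) (c := y) (d := z) hxc (by simp [hadj, hc, hside])
      (by simp [hadj, hzx, hside]) (by simp [hadj, hzx]) hxy (Ne.symm hz.2.1)
    simp [hadj, hside, hzx, hc] at this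

end SimpleGraph

section CompleteBipartite

variable {β : Type} [Fintype β]

theorem twoConnected_completeBipartiteGraph (hβ : 2 ≤ Fintype.card β) :
    TwoConnected (completeBipartiteGraph (Fin 2) β) := by
  classical
  obtain ⟨j₀, j₁, hj⟩ := Fintype.exists_pair_of_one_lt_card hβ
  let f : Fin 2 ⊕ β → Fin 4 := Sum.elim ![0, 2] fun j => if j = j₀ then 3 else 1
  refine TwoConnected.of_induce_ne (by simp; omega)
    (connected_induce_ne_of_stOrdering f (s := .inl 0) (t := .inr j₀) (by simp) ?_ ?_)
  · rintro (i | j) hw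
    · fin_cases i
      · exact absurd rfl hw
      · exact ⟨.inr j₁, by simp, by simp [f, hj.symm]⟩
    · exact ⟨.inl 0, by simp, by simp only [f, Sum.elim_inl, Sum.elim_inr]; split_ifs <;> decide⟩
  · rintro (i | j) hw
    · exact ⟨.inr j₀, by simp, by fin_cases i <;> simp [f]⟩
    · exact ⟨.inl 1, by simp, by simp [f, show j ≠ j₀ by simpa using hw]⟩

theorem not_isCycleGraph_completeBipartiteGraph (hβ : 3 ≤ Fintype.card β) :
    ¬IsCycleGraph (completeBipartiteGraph (Fin 2) β) := by
  obtain ⟨a, b, c, hab, hac, hbc⟩ := Fintype.two_lt_card_iff.mp hβ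
  exact not_isCycleGraph_of_adj (v := .inl 0) (Sum.inr_injective.ne hab)
    (Sum.inr_injective.ne hac) (Sum.inr_injective.ne hbc) (by simp) (by simp) (by simp)

theorem not_hasSpanningTheta_completeBipartiteGraph (hβ : 4 ≤ Fintype.card β) :
    ¬HasSpanningTheta (completeBipartiteGraph (Fin 2) β) := by
  classical
  intro hθ
  obtain ⟨E, hE, hcard⟩ := hθ.exists_isTwoEdgeCover
  have hnbr (j : β) (y : Fin 2 ⊕ β) (hy : (completeBipartiteGraph (Fin 2) β).Adj (.inr j) y) :
      y = .inl 0 ∨ y = .inl 1 := by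
    rcases y with i | j' <;> [fin_cases i <;> simp; simp at hy]
  have hsub : (Finset.univ : Finset (β × Fin 2)).image (fun p => s(.inr p.1, .inl p.2)) ⊆ E := by
    simp only [Finset.image_subset_iff, Finset.mem_univ, forall_const, Prod.forall]
    intro j i
    fin_cases i
    · exact hE.mem_of_forall_adj (hnbr j)
    · exact hE.mem_of_forall_adj fun y hy => (hnbr j y hy).symm
  have hinj : Function.Injective
      fun p : β × Fin 2 => (s(.inr p.1, .inl p.2) : Sym2 (Fin 2 ⊕ β)) := by
    rintro ⟨j, i⟩ ⟨j', i'⟩ h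
    simp_all
  have := Finset.card_le_card hsub
  rw [Finset.card_image_of_injective _ hinj, Finset.card_univ, Fintype.card_prod,
    Fintype.card_fin] at this
  rw [Fintype.card_sum, Fintype.card_fin] at hcard
  omega

end CompleteBipartite

lemma two_le_card_inter_triangle {α : Type} [DecidableEq α] {E : Finset (Sym2 α)} {a b c : α}
    (hab : a ≠ b) (hbc : b ≠ c) (hca : c ≠ a) (ha : s(a, b) ∈ E ∨ s(a, c) ∈ E)
    (hb : s(b, c) ∈ E ∨ s(b, a) ∈ E) (hc : s(c, a) ∈ E ∨ s(c, b) ∈ E) :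
    2 ≤ (E ∩ {s(a, b), s(b, c), s(c, a)}).card := by
  have pair {e e' : Sym2 α} (he : e ∈ E) (he' : e' ∈ E)
      (hT : e ∈ ({s(a, b), s(b, c), s(c, a)} : Finset _))
      (hT' : e' ∈ ({s(a, b), s(b, c), s(c, a)} : Finset _)) (hne : e ≠ e') :
      2 ≤ (E ∩ {s(a, b), s(b, c), s(c, a)}).card :=
    Finset.one_lt_card.2 ⟨e, Finset.mem_inter.2 ⟨he, hT⟩, e', Finset.mem_inter.2 ⟨he', hT'⟩, hne⟩
  obtain ⟨h₁, h₂, h₃⟩ : s(a, b) ≠ s(c, a) ∧ s(a, b) ≠ s(b, c) ∧ s(c, a) ≠ s(b, c) := by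
    grind [Sym2.eq_iff]
  rw [Sym2.eq_swap (a := a) (b := c)] at ha
  rw [Sym2.eq_swap (a := b) (b := a)] at hb
  rw [Sym2.eq_swap (a := c) (b := b)] at hc
  rcases ha with ha | ha
  · rcases hc with hc | hc
    exacts [pair ha hc (by simp) (by simp) h₁, pair ha hc (by simp) (by simp) h₂]
  · rcases hb with hb | hb
    exacts [pair ha hb (by simp) (by simp) h₃, pair ha hb (by simp) (by simp) h₁.symm]

namespace TruncatedTetrahedron

def corner (i : Fin 4) (k : Fin 3) : Fin 18 := ⟨3 * i + k, by omega⟩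

def connector : Fin 4 → Fin 3 → Fin 18 :=
  ![![12, 13, 14], ![12, 15, 16], ![13, 15, 17], ![14, 16, 17]]

/-- The truncated tetrahedron with its six inter-triangle edges subdivided: `connector i k`
subdivides the edge leaving `corner i k`, so each connector occurs in two rows of the table. -/
def subdivided : SimpleGraph (Fin 18) :=
  SimpleGraph.fromRel fun v w =>
    ∃ i k, v = corner i k ∧ ((∃ k', w = corner i k') ∨ w = connector i k)

instance : DecidableRel subdivided.Adj := fun _ _ => inferInstanceAs (Decidable (_ ∧ _))

def triangleEdges (i : Fin 4) : Finset (Sym2 (Fin 18)) :=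
  {s(corner i 0, corner i 1), s(corner i 1, corner i 2), s(corner i 2, corner i 0)}

lemma adj_corner (i : Fin 4) (k : Fin 3) (y : Fin 18) (hy : subdivided.Adj (corner i k) y) :
    y = corner i (k + 1) ∨ y = corner i (k + 2) ∨ y = connector i k := by
  revert i k y; decide

lemma exists_adj_connector (i : Fin 4) (k : Fin 3) :
    ∃ v, ∀ y, subdivided.Adj (connector i k) y → y = corner i k ∨ y = v := by
  revert i k; decide

set_option synthInstance.maxSize 256 in
theorem isClawFree_subdivided : subdivided.IsClawFree := by
  -- each quantifier is followed by its adjacency hypothesis, so `decide` only runs over neighbours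
  have key : ∀ c x, subdivided.Adj c x → ∀ y, subdivided.Adj c y → ∀ z, subdivided.Adj c z →
      x ≠ y → x ≠ z → y ≠ z → subdivided.Adj x y ∨ subdivided.Adj x z ∨ subdivided.Adj y z := by
    decide
  exact fun c x y z hx hy hz => key c x hx y hy z hz

theorem isInducedC4Free_subdivided : subdivided.IsInducedC4Free := by
  have key : ∀ a b, subdivided.Adj a b → ∀ c, subdivided.Adj b c → ∀ d, subdivided.Adj c d →
      subdivided.Adj d a → a ≠ c → b ≠ d → subdivided.Adj a c ∨ subdivided.Adj b d := by
    decide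
  exact fun a b c d hab hbc hcd hda => key a b hab c hbc d hcd hda

theorem twoConnected_subdivided : TwoConnected subdivided := by
  let f : Fin 18 → Fin 18 := ![0, 10, 1, 16, 15, 9, 12, 13, 6, 3, 7, 4, 17, 11, 2, 14, 8, 5]
  exact TwoConnected.of_induce_ne (by simp)
    (connected_induce_ne_of_stOrdering f (s := 0) (t := 12) (by decide) (by decide) (by decide))

theorem not_isCycleGraph_subdivided : ¬IsCycleGraph subdivided :=
  not_isCycleGraph_of_adj (v := 0) (a := 1) (b := 2) (c := 12) (by decide) (by decide) (by decide)
    (by decide) (by decide) (by decide)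

theorem not_hasSpanningTheta_subdivided : ¬HasSpanningTheta subdivided := by
  intro hθ
  obtain ⟨E, hE, hcard⟩ := hθ.exists_isTwoEdgeCover
  rw [Fintype.card_fin] at hcard
  let C := Finset.univ.image fun p : Fin 4 × Fin 3 => s(corner p.1 p.2, connector p.1 p.2)
  have hC : C ⊆ E := by
    simp only [C, Finset.image_subset_iff, Finset.mem_univ, forall_const, Prod.forall]
    intro i k
    obtain ⟨v, hv⟩ := exists_adj_connector i k
    exact Sym2.eq_swap ▸ hE.mem_of_forall_adj hv
  have htri (i : Fin 4) : 2 ≤ (E ∩ triangleEdges i).card :=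
    two_le_card_inter_triangle (by decide +revert) (by decide +revert) (by decide +revert)
      (hE.mem_or_mem_of_forall_adj (adj_corner i 0))
      (hE.mem_or_mem_of_forall_adj (adj_corner i 1))
      (hE.mem_or_mem_of_forall_adj (adj_corner i 2))
  have hCcard : C.card = 12 := by decide
  have hCdisj : Disjoint C (Finset.univ.biUnion fun i => E ∩ triangleEdges i) :=
    Disjoint.mono_right (Finset.biUnion_mono fun i _ => Finset.inter_subset_right) (by decide)
  have htdisj : ∀ i j, i ≠ j → Disjoint (triangleEdges i) (triangleEdges j) := by decide
  have := calc 12 + 4 * 2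
      _ ≤ C.card + ∑ i, (E ∩ triangleEdges i).card := by
        have := Finset.sum_le_sum (s := Finset.univ) fun i _ => htri i
        simp only [Finset.sum_const, Finset.card_univ, Fintype.card_fin, smul_eq_mul] at this
        omega
      _ = (C ∪ Finset.univ.biUnion fun i => E ∩ triangleEdges i).card := by
        rw [Finset.card_union_of_disjoint hCdisj, Finset.card_biUnion fun i _ j _ hij =>
          (htdisj i j hij).mono Finset.inter_subset_right Finset.inter_subset_right]
      _ ≤ E.card := Finset.card_le_card (Finset.union_subset hC
          (Finset.biUnion_subset.2 fun i _ => Finset.inter_subset_left))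
  omega

end TruncatedTetrahedron

/-- If `R` is a connected graph on at least 3 vertices such that every 2-connected
`R`-free non-cycle graph has a spanning Θ-subgraph, then `R = P₃`. -/
theorem stmt_14 {W : Type} [Fintype W] (R : SimpleGraph W)
    (hconn : R.Connected) (hcard : 3 ≤ Fintype.card W)
    (h : ∀ (V : Type) [Fintype V] (G : SimpleGraph V),
      TwoConnected G → IndFree G R → ¬ IsCycleGraph G → HasSpanningTheta G) :
    Nonempty (R ≃g pathGraph 3) := by
  have embeds {V : Type} [Fintype V] (G : SimpleGraph V) (h₂ : TwoConnected G)
      (hcyc : ¬IsCycleGraph G) (hθ : ¬HasSpanningTheta G) : Nonempty (R ↪g G) := by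
    by_contra hR
    exact hθ (h V G h₂ (not_nonempty_iff.mp hR) hcyc)
  obtain ⟨eK⟩ := embeds (completeBipartiteGraph (Fin 2) (Fin 4))
    (twoConnected_completeBipartiteGraph (by simp))
    (not_isCycleGraph_completeBipartiteGraph (by simp))
    (not_hasSpanningTheta_completeBipartiteGraph (by simp))
  obtain ⟨eT⟩ := embeds TruncatedTetrahedron.subdivided
    TruncatedTetrahedron.twoConnected_subdivided TruncatedTetrahedron.not_isCycleGraph_subdivided
    TruncatedTetrahedron.not_hasSpanningTheta_subdivided
  exact nonempty_iso_pathGraph_three_of_embedding eK hconn hcard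
    (TruncatedTetrahedron.isClawFree_subdivided.comap eT)
    (TruncatedTetrahedron.isInducedC4Free_subdivided.comap eT)
end

section
/- The complete bipartite graph K_{2,k} with k ≥ 4 (parts {u1,u2} of size 2 and {v1,...,v_k} of size k) is 2-connected, is not a cycle, and has no spanning Θ-subgraph. -/
open SimpleGraph

/-
Colour the vertices of a bipartite graph by `±1`. Along any walk the colours alternate, so the
signs on the support of a walk from `u` to `v` sum to `(s u + s v) / 2`. In a spanning Θ-subgraph
the three `u`–`v` paths cover every vertex, meeting only in `u` and `v`, so the total sign is
`3 (s u + s v) / 2 - 2 (s u + s v) = -(s u + s v) / 2`, of absolute value at most `1`: the two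
colour classes differ in size by at most one. For `K_{2,k}` they differ by `k - 2 ≥ 2`.
-/

open Finset

theorem Finset.sum_union_union_add_two_nsmul {ι M : Type*} [DecidableEq ι] [AddCommMonoid M]
    {A B C T : Finset ι} (hAB : A ∩ B = T) (hAC : A ∩ C = T) (hBC : B ∩ C = T) (f : ι → M) :
    ∑ x ∈ A ∪ B ∪ C, f x + 2 • ∑ x ∈ T, f x = ∑ x ∈ A, f x + ∑ x ∈ B, f x + ∑ x ∈ C, f x := by
  have hABC : (A ∪ B) ∩ C = T := by rw [union_inter_distrib_right, hAC, hBC, union_self]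
  rw [two_nsmul, ← add_assoc, ← hABC, sum_union_inter, hABC, add_right_comm, ← hAB,
    sum_union_inter]

namespace SimpleGraph

variable {V : Type*} {G : SimpleGraph V}

namespace Coloring

def sign (C : G.Coloring Bool) (x : V) : ℤ := if C x then 1 else -1

theorem sign_eq_neg_of_adj (C : G.Coloring Bool) {x y : V} (h : G.Adj x y) :
    C.sign y = -C.sign x := by
  have hxy := C.valid h
  unfold sign
  cases hx : C x <;> cases hy : C y <;> simp_all

theorem abs_sign_add_sign_le (C : G.Coloring Bool) (x y : V) : |C.sign x + C.sign y| ≤ 2 := by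
  unfold sign
  cases C x <;> cases C y <;> norm_num

end Coloring

theorem Walk.two_mul_sum_sign_support (C : G.Coloring Bool) {u v : V} (p : G.Walk u v) :
    2 * (p.support.map C.sign).sum = C.sign u + C.sign v := by
  induction p with
  | nil => rw [Walk.support_nil, List.map_singleton, List.sum_singleton, two_mul]
  | cons h p ih =>
    rw [Walk.support_cons, List.map_cons, List.sum_cons, mul_add, ih, C.sign_eq_neg_of_adj h]
    ring

theorem Walk.support_toFinset_inter_eq_pair [DecidableEq V] {u v : V} {p q : G.Walk u v}
    (h : ∀ w, w ∈ p.support → w ∈ q.support → w = u ∨ w = v) :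
    p.support.toFinset ∩ q.support.toFinset = {u, v} := by
  ext w
  simp only [mem_inter, List.mem_toFinset, mem_insert, mem_singleton]
  refine ⟨fun hw => h w hw.1 hw.2, ?_⟩
  rintro (rfl | rfl) <;> simp

theorem Walk.IsPath.sum_sign_support_toFinset [DecidableEq V] (C : G.Coloring Bool) {u v : V}
    {p : G.Walk u v} (hp : p.IsPath) :
    2 * ∑ x ∈ p.support.toFinset, C.sign x = C.sign u + C.sign v := by
  rw [List.sum_toFinset _ hp.support_nodup, p.two_mul_sum_sign_support]

end SimpleGraph

open SimpleGraph in
theorem HasSpanningTheta.abs_sum_sign_le {V : Type} [Fintype V] {G : SimpleGraph V}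
    (h : HasSpanningTheta G) (C : G.Coloring Bool) : |∑ x, C.sign x| ≤ 1 := by
  classical
  obtain ⟨u, v, p₁, p₂, p₃, ⟨huv, hp₁, hp₂, hp₃, h₁₂, h₁₃, h₂₃, -⟩, hcover⟩ := h
  have huniv : (univ : Finset V) =
      p₁.support.toFinset ∪ p₂.support.toFinset ∪ p₃.support.toFinset := by
    ext w
    simpa [or_assoc] using hcover w
  have key := sum_union_union_add_two_nsmul (Walk.support_toFinset_inter_eq_pair h₁₂)
    (Walk.support_toFinset_inter_eq_pair h₁₃) (Walk.support_toFinset_inter_eq_pair h₂₃) C.sign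
  rw [← huniv, sum_pair huv, nsmul_eq_mul] at key
  have h₁ := hp₁.sum_sign_support_toFinset C
  have h₂ := hp₂.sum_sign_support_toFinset C
  have h₃ := hp₃.sum_sign_support_toFinset C
  have hbound := C.abs_sign_add_sign_le u v
  rw [abs_le] at hbound ⊢
  push_cast at key
  constructor <;> linarith

namespace SimpleGraph

variable {V W : Type*}

theorem completeBipartiteGraph_neighborSet_inl (v : V) :
    (completeBipartiteGraph V W).neighborSet (Sum.inl v) = Set.range Sum.inr := by
  ext (x | w) <;> simp

theorem completeBipartiteGraph_connected_induce {s : Set (V ⊕ W)} {a : V} {b : W}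
    (ha : Sum.inl a ∈ s) (hb : Sum.inr b ∈ s) :
    ((completeBipartiteGraph V W).induce s).Connected := by
  have hab : ((completeBipartiteGraph V W).induce s).Adj ⟨_, ha⟩ ⟨_, hb⟩ := by simp
  have hreach : ∀ x, ((completeBipartiteGraph V W).induce s).Reachable ⟨_, ha⟩ x := by
    rintro ⟨x | y, hx⟩
    · exact hab.reachable.trans (Adj.reachable (by simp))
    · exact Adj.reachable (by simp)
  exact (connected_iff_exists_forall_reachable _).mpr ⟨_, hreach⟩

theorem CompleteBipartiteGraph.sum_bicoloring_sign [Fintype V] [Fintype W] :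
    ∑ x, (CompleteBipartiteGraph.bicoloring V W).sign x = Fintype.card W - Fintype.card V := by
  simp [Coloring.sign, CompleteBipartiteGraph.bicoloring, Coloring.mk, sub_eq_neg_add]

end SimpleGraph

open SimpleGraph

theorem twoConnected_completeBipartiteGraph_s15 {V W : Type} [Fintype V] [Fintype W]
    [Nontrivial V] [Nontrivial W] : TwoConnected (completeBipartiteGraph V W) := by
  obtain ⟨a⟩ : Nonempty V := inferInstance
  obtain ⟨b⟩ : Nonempty W := inferInstance
  refine ⟨?_, ?_, ?_⟩
  · have := Fintype.one_lt_card (α := V)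
    have := Fintype.one_lt_card (α := W)
    rw [Fintype.card_sum]
    omega
  · exact (induceUnivIso _).connected_iff.mp <|
      completeBipartiteGraph_connected_induce (Set.mem_univ (Sum.inl a))
        (Set.mem_univ (Sum.inr b))
  · rintro (x | y)
    · obtain ⟨a', ha'⟩ := exists_ne x
      exact completeBipartiteGraph_connected_induce (a := a') (b := b)
        (by simpa using ha') (by simp)
    · obtain ⟨b', hb'⟩ := exists_ne y
      exact completeBipartiteGraph_connected_induce (a := a) (b := b')
        (by simp) (by simpa using hb')

theorem not_isCycleGraph_completeBipartiteGraph_s15 {V W : Type} [Nonempty V] (hW : Nat.card W ≠ 2) :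
    ¬ IsCycleGraph (completeBipartiteGraph V W) := by
  obtain ⟨a⟩ : Nonempty V := inferInstance
  rintro ⟨-, hdeg⟩
  have := hdeg (Sum.inl a)
  rw [completeBipartiteGraph_neighborSet_inl,
    Set.ncard_range_of_injective Sum.inr_injective] at this
  exact hW this

theorem not_hasSpanningTheta_completeBipartiteGraph_s15 {V W : Type} [Fintype V] [Fintype W]
    (h : 1 < |(Fintype.card W : ℤ) - Fintype.card V|) :
    ¬ HasSpanningTheta (completeBipartiteGraph V W) := by
  intro hθ
  have := hθ.abs_sum_sign_le (CompleteBipartiteGraph.bicoloring V W)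
  rw [CompleteBipartiteGraph.sum_bicoloring_sign] at this
  exact this.not_gt h

/-- The complete bipartite graph `K_{2,k}` with `k ≥ 4` is 2-connected, is not a
cycle, and has no spanning Θ-subgraph. -/
theorem stmt_15 (k : ℕ) (hk : 4 ≤ k) :
    TwoConnected (completeBipartiteGraph (Fin 2) (Fin k)) ∧
    ¬ IsCycleGraph (completeBipartiteGraph (Fin 2) (Fin k)) ∧
    ¬ HasSpanningTheta (completeBipartiteGraph (Fin 2) (Fin k)) := by
  have : Nontrivial (Fin k) := Fin.nontrivial_iff_two_le.mpr (by omega)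
  refine ⟨twoConnected_completeBipartiteGraph_s15, ?_, ?_⟩
  · exact not_isCycleGraph_completeBipartiteGraph_s15 (by rw [Nat.card_fin]; omega)
  · refine not_hasSpanningTheta_completeBipartiteGraph_s15 ?_
    rw [Fintype.card_fin, Fintype.card_fin, lt_abs]
    omega
end

section
/- Let G be a graph, x ∈ V(G) a vertex with disconnected neighborhood whose induced neighborhood graph is the disjoint union of two cliques A1 and A2, and suppose G is claw-free. Then for every component H of G − ({x} ∪ N(x)) and every vertex z ∈ N(x) having a neighbor in H, the set of neighbors of z in H induces a clique, and N(z) ⊆ {x} ∪ A_i ∪ V(H) where A_i is the clique of the neighborhood of x containing z. -/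
open SimpleGraph

/- Claw-freeness at `z`, with `x` as one leaf: two neighbours of `z` outside `N[x]` must be
adjacent. Applied to two neighbours of `z` in `H` this gives the clique; applied to a
neighbour `h₀ ∈ H` and any other neighbour `w ∉ N[x]` it forces `w` into `H`, because `H`
has no edges leaving `H ∪ N[x]`. Inside `N(x)`, a neighbour of `z ∈ Aᵢ` lies in `Aᵢ`
since there are no edges between `A₁` and `A₂`. -/

lemma IndFree.adj_or_adj_or_adj {V : Type} {G : SimpleGraph V}
    (hclaw : IndFree G (completeBipartiteGraph (Fin 1) (Fin 3)))
    {z a b c : V} (hza : G.Adj z a) (hzb : G.Adj z b) (hzc : G.Adj z c)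
    (hab : a ≠ b) (hac : a ≠ c) (hbc : b ≠ c) :
    G.Adj a b ∨ G.Adj a c ∨ G.Adj b c := by
  by_contra! ⟨nab, nac, nbc⟩
  apply hclaw.false
  refine ⟨⟨Sum.elim (fun _ => z) ![a, b, c], ?_⟩, ?_⟩
  · rintro (i | i) (j | j) h <;> simp_all
    · exact Subsingleton.elim i j
    · exfalso; fin_cases j <;> simp_all
    · exfalso; fin_cases i <;> simp_all
    · fin_cases i <;> fin_cases j <;> simp_all
  · intro i j
    change G.Adj (Sum.elim (fun _ => z) ![a, b, c] i) (Sum.elim (fun _ => z) ![a, b, c] j) ↔ _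
    rcases i with i | i <;> rcases j with j | j <;>
      fin_cases i <;> fin_cases j <;>
      simp_all [completeBipartiteGraph, G.adj_comm]

lemma IndFree.adj_of_not_adj_of_adj {V : Type} {G : SimpleGraph V}
    (hclaw : IndFree G (completeBipartiteGraph (Fin 1) (Fin 3)))
    {x z a b : V} (hzx : G.Adj z x) (hza : G.Adj z a) (hzb : G.Adj z b)
    (hxa : ¬ G.Adj x a) (hxb : ¬ G.Adj x b) (hax : a ≠ x) (hbx : b ≠ x) (hab : a ≠ b) :
    G.Adj a b := by
  rcases hclaw.adj_or_adj_or_adj hzx hza hzb hax.symm hbx.symm hab with h | h | h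
  exacts [absurd h hxa, absurd h hxb, h]

lemma mem_of_adj_of_union_eq_neighborSet {V : Type} {G : SimpleGraph V} {x z w : V}
    {A B : Set V} (hAB : A ∪ B = G.neighborSet x) (hnoedge : ∀ a ∈ A, ∀ b ∈ B, ¬ G.Adj a b)
    (hz : z ∈ A) (hzw : G.Adj z w) (hw : w ∈ G.neighborSet x) : w ∈ A :=
  ((hAB ▸ hw : w ∈ A ∪ B)).resolve_right fun hwB => hnoedge z hz w hwB hzw

theorem stmt_19_general {V : Type} (G : SimpleGraph V)
    (hclaw : IndFree G (completeBipartiteGraph (Fin 1) (Fin 3)))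
    (x : V) (A1 A2 : Set V)
    (hA : A1 ∪ A2 = G.neighborSet x)
    (hnoedge : ∀ a ∈ A1, ∀ b ∈ A2, ¬ G.Adj a b)
    (H : Set V)
    (hHsub : ∀ h ∈ H, h ≠ x ∧ h ∉ G.neighborSet x)
    (hHclosed : ∀ a ∈ H, ∀ b, G.Adj a b → b ∈ H ∨ b = x ∨ b ∈ G.neighborSet x) :
    ∀ z ∈ G.neighborSet x, (∃ h ∈ H, G.Adj z h) →
      ((∀ a ∈ G.neighborSet z ∩ H, ∀ b ∈ G.neighborSet z ∩ H, a ≠ b → G.Adj a b) ∧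
       (z ∈ A1 → ∀ w, G.Adj z w → w = x ∨ w ∈ A1 ∨ w ∈ H) ∧
       (z ∈ A2 → ∀ w, G.Adj z w → w = x ∨ w ∈ A2 ∨ w ∈ H)) := by
  rintro z hz ⟨h₀, hh₀, hzh₀⟩
  have hzx : G.Adj z x := hz.symm
  have hneighbors : ∀ w, G.Adj z w → w = x ∨ w ∈ G.neighborSet x ∨ w ∈ H := by
    intro w hzw
    by_contra! ⟨hwx, hwN, hwH⟩
    have hh₀w : G.Adj h₀ w := hclaw.adj_of_not_adj_of_adj hzx hzh₀ hzw (hHsub h₀ hh₀).2 hwN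
      (hHsub h₀ hh₀).1 hwx (by rintro rfl; exact hwH hh₀)
    rcases hHclosed h₀ hh₀ w hh₀w with h | h | h
    exacts [hwH h, hwx h, hwN h]
  refine ⟨?_, fun hz1 w hzw => ?_, fun hz2 w hzw => ?_⟩
  · rintro a ⟨hza, haH⟩ b ⟨hzb, hbH⟩ hab
    exact hclaw.adj_of_not_adj_of_adj hzx hza hzb (hHsub a haH).2 (hHsub b hbH).2
      (hHsub a haH).1 (hHsub b hbH).1 hab
  · rcases hneighbors w hzw with h | h | h
    exacts [.inl h, .inr (.inl (mem_of_adj_of_union_eq_neighborSet hA hnoedge hz1 hzw h)),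
      .inr (.inr h)]
  · rcases hneighbors w hzw with h | h | h
    exacts [.inl h, .inr (.inl (mem_of_adj_of_union_eq_neighborSet (Set.union_comm A1 A2 ▸ hA)
      (fun a ha b hb hab => hnoedge b hb a ha hab.symm) hz2 hzw h)), .inr (.inr h)]

/-- Let `G` be claw-free and `x` a vertex whose neighborhood induces the disjoint
union of two (nonempty) cliques `A1` and `A2`. Then for every component `H` of
`G − ({x} ∪ N(x))` and every `z ∈ N(x)` with a neighbor in `H`, the neighbors of `z`
in `H` form a clique, and `N(z) ⊆ {x} ∪ Aᵢ ∪ H` where `Aᵢ` is the clique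
containing `z`. -/
theorem stmt_19 {V : Type} (G : SimpleGraph V)
    (hclaw : IndFree G (completeBipartiteGraph (Fin 1) (Fin 3)))
    (x : V) (A1 A2 : Set V)
    (hA : A1 ∪ A2 = G.neighborSet x)
    (hdisj : Disjoint A1 A2)
    (hA1ne : A1.Nonempty) (hA2ne : A2.Nonempty)
    (hA1cl : ∀ a ∈ A1, ∀ b ∈ A1, a ≠ b → G.Adj a b)
    (hA2cl : ∀ a ∈ A2, ∀ b ∈ A2, a ≠ b → G.Adj a b)
    (hnoedge : ∀ a ∈ A1, ∀ b ∈ A2, ¬ G.Adj a b)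
    (H : Set V)
    (hHsub : ∀ h ∈ H, h ≠ x ∧ h ∉ G.neighborSet x)
    (hHne : H.Nonempty)
    (hHconn : (G.induce H).Connected)
    (hHclosed : ∀ a ∈ H, ∀ b, G.Adj a b → b ∈ H ∨ b = x ∨ b ∈ G.neighborSet x) :
    ∀ z ∈ G.neighborSet x, (∃ h ∈ H, G.Adj z h) →
      ((∀ a ∈ G.neighborSet z ∩ H, ∀ b ∈ G.neighborSet z ∩ H, a ≠ b → G.Adj a b) ∧
       (z ∈ A1 → ∀ w, G.Adj z w → w = x ∨ w ∈ A1 ∨ w ∈ H) ∧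
       (z ∈ A2 → ∀ w, G.Adj z w → w = x ∨ w ∈ A2 ∨ w ∈ H)) :=
  stmt_19_general G hclaw x A1 A2 hA hnoedge H hHsub hHclosed
end
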